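/- arXiv:2003.01948 — 4 statements merged into one kernel-verified Lean document; each statement's English description precedes it below -/
import Mathlib

section
/- If α_m → α with |α_m − α| ≤ κ·β^m for κ > 0 and β ∈ (0,1), then δ²·∑_{m=0}^∞ (1-δ)^{2m} α_m² = (α²/2)·δ + O(δ²) as δ → 0. -/
/-!
Write `α m ^ 2 = a ^ 2 + e m`. Geometric convergence of `α m` to `a` makes `e` absolutely
summable, so its contribution `δ ^ 2 * ∑' m, (1 - δ) ^ (2 * m) * e m` is bounded by
`δ ^ 2 * ∑' m, |e m|`. The constant part sums to
`a ^ 2 * δ ^ 2 / (1 - (1 - δ) ^ 2) = a ^ 2 * δ / (2 - δ)`, which differs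
from `a ^ 2 / 2 * δ` by `a ^ 2 * δ ^ 2 / (2 * (2 - δ))`.
-/

open Set

lemma abs_sq_sub_sq_le_of_abs_sub_le {x a ε : ℝ} (h : |x - a| ≤ ε) :
    |x ^ 2 - a ^ 2| ≤ ε * (ε + 2 * |a|) := by
  have hsum : |x + a| ≤ ε + 2 * |a| :=
    calc |x + a| = |(x - a) + 2 * a| := by ring_nf
      _ ≤ |x - a| + 2 * |a| := by simpa [abs_mul] using abs_add_le (x - a) (2 * a)
      _ ≤ ε + 2 * |a| := by linarith
  calc |x ^ 2 - a ^ 2| = |x - a| * |x + a| := by rw [← abs_mul]; ring_nf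
    _ ≤ ε * (ε + 2 * |a|) := mul_le_mul h hsum (abs_nonneg _) ((abs_nonneg _).trans h)

lemma summable_abs_sq_sub_sq_of_abs_sub_le_geometric {x : ℕ → ℝ} {a κ β : ℝ}
    (hβ0 : 0 ≤ β) (hβ1 : β < 1) (h : ∀ m, |x m - a| ≤ κ * β ^ m) :
    Summable fun m => |x m ^ 2 - a ^ 2| := by
  have hκ : 0 ≤ κ := by simpa using (abs_nonneg _).trans (h 0)
  refine Summable.of_nonneg_of_le (fun m => abs_nonneg _) (fun m => ?_)
    ((summable_geometric_of_lt_one hβ0 hβ1).mul_left (κ * (κ + 2 * |a|)))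
  have hpow : β ^ m ≤ 1 := pow_le_one₀ hβ0 hβ1.le
  calc |x m ^ 2 - a ^ 2| ≤ κ * β ^ m * (κ * β ^ m + 2 * |a|) :=
        abs_sq_sub_sq_le_of_abs_sub_le (h m)
    _ ≤ κ * β ^ m * (κ + 2 * |a|) := by gcongr; exact mul_le_of_le_one_right hκ hpow
    _ = κ * (κ + 2 * |a|) * β ^ m := by ring

section GeometricWeights

variable {u : ℕ → ℝ} {L r : ℝ}

lemma abs_pow_mul_le (hr0 : 0 ≤ r) (hr1 : r ≤ 1) (m : ℕ) (x : ℝ) : |r ^ m * x| ≤ |x| := by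
  rw [abs_mul, abs_of_nonneg (pow_nonneg hr0 m)]
  exact mul_le_of_le_one_left (abs_nonneg x) (pow_le_one₀ hr0 hr1)

lemma summable_pow_mul_sub (hr0 : 0 ≤ r) (hr1 : r ≤ 1) (hu : Summable fun m => |u m - L|) :
    Summable fun m => r ^ m * (u m - L) :=
  .of_norm_bounded hu fun m => abs_pow_mul_le hr0 hr1 m _

lemma abs_tsum_pow_mul_sub_le (hr0 : 0 ≤ r) (hr1 : r ≤ 1) (hu : Summable fun m => |u m - L|) :
    |∑' m, r ^ m * (u m - L)| ≤ ∑' m, |u m - L| :=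
  tsum_of_norm_bounded (f := fun m => r ^ m * (u m - L)) hu.hasSum fun m =>
    abs_pow_mul_le hr0 hr1 m _

lemma tsum_pow_mul_eq (hr0 : 0 ≤ r) (hr1 : r < 1) (hu : Summable fun m => |u m - L|) :
    ∑' m, r ^ m * u m = L / (1 - r) + ∑' m, r ^ m * (u m - L) := by
  have hconst : Summable fun m => r ^ m * L := (summable_geometric_of_lt_one hr0 hr1).mul_right L
  calc ∑' m, r ^ m * u m = ∑' m, (r ^ m * L + r ^ m * (u m - L)) := tsum_congr fun m => by ring
    _ = ∑' m, r ^ m * L + ∑' m, r ^ m * (u m - L) :=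
        hconst.tsum_add (summable_pow_mul_sub hr0 hr1.le hu)
    _ = L / (1 - r) + ∑' m, r ^ m * (u m - L) := by
        rw [tsum_mul_right, tsum_geometric_of_lt_one hr0 hr1, div_eq_inv_mul]

lemma abs_sq_mul_tsum_one_sub_pow_mul_sub_le {δ : ℝ} (hδ : δ ∈ Ioo (0 : ℝ) 1)
    (hu : Summable fun m => |u m - L|) :
    |δ ^ 2 * ∑' m, (1 - δ) ^ (2 * m) * u m - L / 2 * δ| ≤
      (|L| / 2 + ∑' m, |u m - L|) * δ ^ 2 := by
  obtain ⟨hδ0, hδ1⟩ := hδ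
  have hr0 : 0 ≤ (1 - δ) ^ 2 := sq_nonneg _
  have hr1 : (1 - δ) ^ 2 < 1 := by nlinarith
  have hsplit : δ ^ 2 * ∑' m, (1 - δ) ^ (2 * m) * u m - L / 2 * δ
      = L * δ ^ 2 / (2 * (2 - δ)) + δ ^ 2 * ∑' m, ((1 - δ) ^ 2) ^ m * (u m - L) := by
    simp_rw [pow_mul]
    rw [tsum_pow_mul_eq hr0 hr1 hu, show 1 - (1 - δ) ^ 2 = δ * (2 - δ) by ring]
    generalize ∑' m, ((1 - δ) ^ 2) ^ m * (u m - L) = T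
    have : 2 - δ ≠ 0 := by linarith
    field_simp
    ring
  have hconst : |L * δ ^ 2 / (2 * (2 - δ))| ≤ |L| / 2 * δ ^ 2 := by
    rw [abs_div, abs_mul, abs_of_nonneg (sq_nonneg δ),
      abs_of_pos (by linarith : (0 : ℝ) < 2 * (2 - δ)), div_le_iff₀ (by linarith)]
    nlinarith [mul_nonneg (abs_nonneg L) (sq_nonneg δ)]
  have herr :
      |δ ^ 2 * ∑' m, ((1 - δ) ^ 2) ^ m * (u m - L)| ≤ (∑' m, |u m - L|) * δ ^ 2 := by
    rw [abs_mul, abs_of_nonneg (sq_nonneg δ), mul_comm]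
    exact mul_le_mul_of_nonneg_right (abs_tsum_pow_mul_sub_le hr0 hr1.le hu) (sq_nonneg δ)
  calc |δ ^ 2 * ∑' m, (1 - δ) ^ (2 * m) * u m - L / 2 * δ|
      ≤ |L * δ ^ 2 / (2 * (2 - δ))| + |δ ^ 2 * ∑' m, ((1 - δ) ^ 2) ^ m * (u m - L)| :=
        hsplit ▸ abs_add_le _ _
    _ ≤ (|L| / 2 + ∑' m, |u m - L|) * δ ^ 2 := by linarith

end GeometricWeights

theorem weighted_geometric_square_series_big_O_general
    (α : ℕ → ℝ)
    (a κ β : ℝ) (hβ : β ∈ Set.Ioo (0:ℝ) 1)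
    (hgeo : ∀ m, |α m - a| ≤ κ * β ^ m) :
    ∃ C : ℝ, ∀ δ ∈ Set.Ioo (0:ℝ) 1,
      |δ ^ 2 * ∑' m : ℕ, (1 - δ) ^ (2 * m) * (α m) ^ 2 - a ^ 2 / 2 * δ| ≤ C * δ ^ 2 := by
  have hsum := summable_abs_sq_sub_sq_of_abs_sub_le_geometric hβ.1.le hβ.2 hgeo
  exact ⟨_, fun δ hδ =>
    abs_sq_mul_tsum_one_sub_pow_mul_sub_le (u := fun m => α m ^ 2) hδ hsum⟩

theorem weighted_geometric_square_series_big_O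
    (α : ℕ → ℝ) (hα : ∀ m, α m ∈ Set.Ioo (0:ℝ) 1)
    (a κ β : ℝ) (hκ : 0 < κ) (hβ : β ∈ Set.Ioo (0:ℝ) 1)
    (hgeo : ∀ m, |α m - a| ≤ κ * β ^ m) :
    ∃ C : ℝ, ∀ δ ∈ Set.Ioo (0:ℝ) 1,
      |δ ^ 2 * ∑' m : ℕ, (1 - δ) ^ (2 * m) * (α m) ^ 2 - a ^ 2 / 2 * δ| ≤ C * δ ^ 2 :=
  weighted_geometric_square_series_big_O_general α a κ β hβ hgeo
end

section
/- If additionally |α_m − α| ≤ κβ^m with κ > 0, β ∈ (0,1), then E[s(δ)] = α·m_z + O(δ) as δ → 0. -/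
/-!
By linearity and identical distribution, `E[s(δ)] = m_z ∑ δ (1-δ)^m α_m`; the exchange of
expectation and series is justified because `∑ |δ (1-δ)^m α_m| E|z_0| < ∞`. Since the weights
`δ (1-δ)^m` sum to `1`, the deviation from `α` is `∑ δ (1-δ)^m (α_m - α)`, which is at most
`δ ∑ κ β^m = κ δ / (1 - β)` in absolute value.
-/

open MeasureTheory ProbabilityTheory

section IdentDistrib

variable {Ω E : Type*} [MeasurableSpace Ω] {μ : Measure Ω}
  [NormedAddCommGroup E] [NormedSpace ℝ E] [MeasurableSpace E] [BorelSpace E]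

theorem integral_tsum_smul_of_identDistrib {z : ℕ → Ω → E}
    (hident : ∀ m, IdentDistrib (z m) (z 0) μ μ) (hint : Integrable (z 0) μ)
    {c : ℕ → ℝ} (hc : Summable c) :
    ∫ ω, ∑' m, c m • z m ω ∂μ = (∑' m, c m) • ∫ ω, z 0 ω ∂μ := by
  have hint_m : ∀ m, Integrable (z m) μ := fun m => (hident m).integrable_iff.2 hint
  have hnorm : ∀ m, ∫ ω, ‖c m • z m ω‖ ∂μ = |c m| * ∫ ω, ‖z 0 ω‖ ∂μ := fun m => by
    simp only [norm_smul, Real.norm_eq_abs, integral_const_mul, (hident m).norm.integral_eq]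
  have hsum_norm : Summable fun m => ∫ ω, ‖c m • z m ω‖ ∂μ := by
    simpa only [hnorm] using hc.abs.mul_right _
  rw [(hasSum_integral_of_summable_integral_norm (F := fun m ω => c m • z m ω)
    (fun m => (hint_m m).smul (c m)) hsum_norm).tsum_eq.symm, ← hc.tsum_smul_const]
  congr 1 with m
  rw [integral_smul, (hident m).integral_eq]

end IdentDistrib

section GeometricWeights

variable {δ : ℝ}

theorem hasSum_geometric_weights (h0 : 0 < δ) (h1 : δ ≤ 1) :
    HasSum (fun m : ℕ => δ * (1 - δ) ^ m) 1 := by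
  have := (hasSum_geometric_of_lt_one (sub_nonneg.2 h1) (sub_lt_self 1 h0)).mul_left δ
  rwa [sub_sub_cancel, mul_inv_cancel₀ h0.ne'] at this

theorem abs_geometric_weight_mul_le {x : ℝ} (h0 : 0 < δ) (h1 : δ ≤ 1) (m : ℕ) :
    |δ * (1 - δ) ^ m * x| ≤ δ * |x| := by
  rw [abs_mul, abs_mul, abs_of_pos h0, abs_of_nonneg (pow_nonneg (sub_nonneg.2 h1) m)]
  gcongr
  exact mul_le_of_le_one_right h0.le (pow_le_one₀ (sub_nonneg.2 h1) (by linarith))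

theorem summable_geometric_weights_mul_and_abs_tsum_sub_le {α : ℕ → ℝ} {a κ β : ℝ}
    (h0 : 0 < δ) (h1 : δ ≤ 1) (hβ0 : 0 ≤ β) (hβ1 : β < 1)
    (hgeo : ∀ m, |α m - a| ≤ κ * β ^ m) :
    Summable (fun m => δ * (1 - δ) ^ m * α m) ∧
      |∑' m, δ * (1 - δ) ^ m * α m - a| ≤ κ / (1 - β) * δ := by
  set e : ℕ → ℝ := fun m => δ * (1 - δ) ^ m * (α m - a)
  have he_le : ∀ m, ‖e m‖ ≤ δ * κ * β ^ m := fun m => by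
    rw [mul_assoc]
    exact (abs_geometric_weight_mul_le h0 h1 m).trans (mul_le_mul_of_nonneg_left (hgeo m) h0.le)
  have hgeom : HasSum (fun m : ℕ => δ * κ * β ^ m) (δ * κ * (1 - β)⁻¹) :=
    (hasSum_geometric_of_lt_one hβ0 hβ1).mul_left _
  have he : Summable e := .of_norm_bounded hgeom.summable he_le
  have hsplit : HasSum (fun m => δ * (1 - δ) ^ m * α m) (a * 1 + ∑' m, e m) := by
    refine (((hasSum_geometric_weights h0 h1).mul_left a).add he.hasSum).congr_fun fun m => ?_
    simp only [e]
    ring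
  refine ⟨hsplit.summable, ?_⟩
  rw [hsplit.tsum_eq, mul_one, add_sub_cancel_left]
  calc |∑' m, e m| ≤ δ * κ * (1 - β)⁻¹ := tsum_of_norm_bounded hgeom he_le
    _ = κ / (1 - β) * δ := by ring

end GeometricWeights

theorem expectation_of_weighted_series_big_O_general
    {Ω : Type*} [MeasurableSpace Ω] (μ : Measure Ω)
    (z : ℕ → Ω → ℝ) (hmeas : ∀ m, Measurable (z m))
    (hident : ∀ m, Measure.map (z m) μ = Measure.map (z 0) μ)
    (hint : Integrable (z 0) μ)
    (α : ℕ → ℝ)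
    (a κ β : ℝ) (hβ : β ∈ Set.Ioo (0:ℝ) 1)
    (hgeo : ∀ m, |α m - a| ≤ κ * β ^ m) :
    ∃ C : ℝ, ∀ δ ∈ Set.Ioo (0:ℝ) 1,
      |(∫ ω, (∑' m : ℕ, δ * (1 - δ) ^ m * α m * z m ω) ∂μ)
        - a * ∫ ω, z 0 ω ∂μ| ≤ C * δ := by
  have hid : ∀ m, IdentDistrib (z m) (z 0) μ μ :=
    fun m => ⟨(hmeas m).aemeasurable, (hmeas 0).aemeasurable, hident m⟩
  refine ⟨κ / (1 - β) * |∫ ω, z 0 ω ∂μ|, fun δ hδ => ?_⟩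
  obtain ⟨hsum, hle⟩ :=
    summable_geometric_weights_mul_and_abs_tsum_sub_le hδ.1 hδ.2.le hβ.1.le hβ.2 hgeo
  have hmean := integral_tsum_smul_of_identDistrib hid hint hsum
  simp only [smul_eq_mul] at hmean
  rw [hmean, ← sub_mul, abs_mul, mul_right_comm]
  exact mul_le_mul_of_nonneg_right hle (abs_nonneg _)

theorem expectation_of_weighted_series_big_O
    {Ω : Type*} [MeasurableSpace Ω] (μ : Measure Ω) [IsProbabilityMeasure μ]
    (z : ℕ → Ω → ℝ) (hmeas : ∀ m, Measurable (z m))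
    (hindep : iIndepFun z μ)
    (hident : ∀ m, Measure.map (z m) μ = Measure.map (z 0) μ)
    (hint : Integrable (z 0) μ)
    (α : ℕ → ℝ) (hα : ∀ m, α m ∈ Set.Ioo (0:ℝ) 1)
    (a κ β : ℝ) (hκ : 0 < κ) (hβ : β ∈ Set.Ioo (0:ℝ) 1)
    (hgeo : ∀ m, |α m - a| ≤ κ * β ^ m) :
    ∃ C : ℝ, ∀ δ ∈ Set.Ioo (0:ℝ) 1,
      |(∫ ω, (∑' m : ℕ, δ * (1 - δ) ^ m * α m * z m ω) ∂μ)
        - a * ∫ ω, z 0 ω ∂μ| ≤ C * δ :=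
  expectation_of_weighted_series_big_O_general μ z hmeas hident hint α a κ β hβ hgeo
end

section
/- Weak law of small step-sizes: under the setup of Lemma 1 with α_m → α geometrically fast, s(δ) = δ·∑_{m=0}^∞ (1-δ)^m α_m z_m converges in probability to α·m_z as δ → 0, i.e., for every ε > 0, P(|s(δ) − α·m_z| > ε) → 0 as δ → 0. -/
/-!
By the strong law of large numbers the Cesàro means of `z m ω` converge almost surely to `m_z`.
Since `|α m - a| ≤ κ β^m` and `∑ β^m |z m|` is almost surely finite (its expectation is), the
Cesàro means of `α m * z m ω` converge to `a * m_z`. Cesàro convergence implies Abel convergence: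
summing by parts, `δ ∑ (1-δ)^m x m` is the average of the Cesàro means `(n+1)⁻¹ ∑_{i ≤ n} x i`
against the probability weights `δ² (n+1) (1-δ)^n`, whose mass escapes to infinity as `δ → 0`.
So `s(δ) → a * m_z` almost surely, and almost sure convergence along the countably generated
filter `δ → 0⁺` implies convergence in probability.
-/

open MeasureTheory ProbabilityTheory Filter Finset Topology

noncomputable def cesaroMean (x : ℕ → ℝ) (n : ℕ) : ℝ := (n : ℝ)⁻¹ * ∑ i ∈ range n, x i

theorem cesaroMean_const_mul_add (c : ℝ) (x y : ℕ → ℝ) (n : ℕ) :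
    cesaroMean (fun i => c * x i + y i) n = c * cesaroMean x n + cesaroMean y n := by
  simp only [cesaroMean, sum_add_distrib, ← mul_sum]
  ring

theorem tendsto_cesaroMean_of_summable {y : ℕ → ℝ} (hy : Summable y) :
    Tendsto (cesaroMean y) atTop (𝓝 0) := by
  unfold cesaroMean
  simpa using tendsto_inv_atTop_nhds_zero_nat.mul hy.hasSum.tendsto_sum_nat

theorem tendsto_cesaroMean_mul_of_summable {x u : ℕ → ℝ} {a L : ℝ}
    (hx : Tendsto (cesaroMean x) atTop (𝓝 L)) (hu : Summable fun m => (u m - a) * x m) :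
    Tendsto (cesaroMean fun m => u m * x m) atTop (𝓝 (a * L)) := by
  have h := (hx.const_mul a).add (tendsto_cesaroMean_of_summable hu)
  rw [add_zero] at h
  refine h.congr fun n => ?_
  rw [← cesaroMean_const_mul_add]
  congr 1
  ext m
  ring

theorem Summable.mul_of_abs_le {w d : ℕ → ℝ} (hw : Summable w) {B : ℝ} (hB : ∀ n, |d n| ≤ B) :
    Summable fun n => w n * d n := by
  refine Summable.of_norm_bounded (hw.abs.mul_right B) fun n => ?_
  rw [Real.norm_eq_abs, abs_mul]
  exact mul_le_mul_of_nonneg_left (hB n) (abs_nonneg _)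

theorem abs_tsum_mul_le_of_hasSum_one {w e : ℕ → ℝ} (hw0 : ∀ n, 0 ≤ w n) (hw : HasSum w 1)
    {B η : ℝ} {N : ℕ} (hB : ∀ n, |e n| ≤ B) (hN : ∀ n ≥ N, |e n| ≤ η) :
    |∑' n, w n * e n| ≤ B * ∑ n ∈ range N, w n + η := by
  have hη : 0 ≤ η := (abs_nonneg _).trans (hN N le_rfl)
  have hhead : |∑ n ∈ range N, w n * e n| ≤ B * ∑ n ∈ range N, w n := by
    rw [mul_sum]
    refine (abs_sum_le_sum_abs _ _).trans (sum_le_sum fun n _ => ?_)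
    rw [abs_mul, abs_of_nonneg (hw0 n), mul_comm]
    exact mul_le_mul_of_nonneg_right (hB n) (hw0 n)
  have htail : |∑' n, w (n + N) * e (n + N)| ≤ η := by
    have hsplit := hw.summable.sum_add_tsum_nat_add N
    have hw_tail : HasSum (fun n => η * w (n + N)) (η * ∑' n, w (n + N)) :=
      ((summable_nat_add_iff (f := w) N).2 hw.summable).hasSum.mul_left η
    refine (tsum_of_norm_bounded (f := fun n => w (n + N) * e (n + N)) hw_tail
      fun n => ?_).trans ?_
    · rw [Real.norm_eq_abs, abs_mul, abs_of_nonneg (hw0 _), mul_comm]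
      exact mul_le_mul_of_nonneg_right (hN _ (Nat.le_add_left N n)) (hw0 _)
    · rw [hw.tsum_eq] at hsplit
      have := sum_nonneg fun n (_ : n ∈ range N) => hw0 n
      nlinarith
  rw [← (hw.summable.mul_of_abs_le hB).sum_add_tsum_nat_add N]
  exact (abs_add_le _ _).trans (add_le_add hhead htail)

theorem tendsto_tsum_mul_of_tendsto_zero {ι : Type*} {l : Filter ι} {w : ι → ℕ → ℝ}
    (hw0 : ∀ᶠ i in l, ∀ n, 0 ≤ w i n) (hw : ∀ᶠ i in l, HasSum (w i) 1)
    (hw_zero : ∀ n, Tendsto (fun i => w i n) l (𝓝 0)) {e : ℕ → ℝ}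
    (he : Tendsto e atTop (𝓝 0)) :
    Tendsto (fun i => ∑' n, w i n * e n) l (𝓝 0) := by
  obtain ⟨B, hB⟩ := he.abs.bddAbove_range
  rw [Metric.tendsto_nhds]
  intro ε hε
  obtain ⟨N, hN⟩ := Metric.tendsto_atTop.mp he (ε / 2) (half_pos hε)
  have hhead : Tendsto (fun i => B * ∑ n ∈ range N, w i n) l (𝓝 0) := by
    simpa using (tendsto_finsetSum (range N) fun n _ => hw_zero n).const_mul B
  filter_upwards [hw0, hw, hhead.eventually (gt_mem_nhds (half_pos hε))] with i hi0 hi hhead_i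
  rw [Real.dist_eq, sub_zero]
  have hN' : ∀ n ≥ N, |e n| ≤ ε / 2 := fun n hn => by simpa [Real.dist_eq] using (hN n hn).le
  linarith [abs_tsum_mul_le_of_hasSum_one hi0 hi (fun n => hB ⟨n, rfl⟩) hN']

theorem tendsto_tsum_mul_of_tendsto {ι : Type*} {l : Filter ι} {w : ι → ℕ → ℝ}
    (hw0 : ∀ᶠ i in l, ∀ n, 0 ≤ w i n) (hw : ∀ᶠ i in l, HasSum (w i) 1)
    (hw_zero : ∀ n, Tendsto (fun i => w i n) l (𝓝 0)) {d : ℕ → ℝ} {L : ℝ}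
    (hd : Tendsto d atTop (𝓝 L)) :
    Tendsto (fun i => ∑' n, w i n * d n) l (𝓝 L) := by
  have h0 := tendsto_tsum_mul_of_tendsto_zero hw0 hw hw_zero (e := fun n => d n - L)
    (by simpa using hd.sub_const L)
  obtain ⟨B, hB⟩ := (hd.sub_const L).abs.bddAbove_range
  rw [← add_zero L]
  refine (h0.const_add L).congr' ?_
  filter_upwards [hw] with i hi
  have hs := hi.summable.mul_of_abs_le fun n => hB ⟨n, rfl⟩
  calc L + ∑' n, w i n * (d n - L) = ∑' n, (L * w i n + w i n * (d n - L)) := by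
        rw [(hi.summable.mul_left L).tsum_add hs, tsum_mul_left, hi.tsum_eq, mul_one]
    _ = ∑' n, w i n * d n := by congr 1; ext n; ring

theorem hasSum_pow_mul_of_hasSum_pow_mul_partialSum {R : Type*} [CommRing R] [TopologicalSpace R]
    [IsTopologicalRing R] {x : ℕ → R} {r T : R}
    (h : HasSum (fun n => r ^ n * ∑ i ∈ range (n + 1), x i) T) :
    HasSum (fun n => r ^ n * x n) ((1 - r) * T) := by
  have hshift : HasSum (fun n => r ^ n * ∑ i ∈ range n, x i) (r * T) := by
    rw [← hasSum_nat_add_iff' 1]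
    simpa [pow_succ, mul_assoc, mul_left_comm r] using h.mul_left r
  have hx : (fun n => r ^ n * x n) =
      fun n => r ^ n * ∑ i ∈ range (n + 1), x i - r ^ n * ∑ i ∈ range n, x i := by
    ext n; rw [sum_range_succ]; ring
  rw [hx, sub_mul, one_mul]
  exact h.sub hshift

theorem hasSum_sq_one_sub_mul_succ_mul_geometric {r : ℝ} (hr : |r| < 1) :
    HasSum (fun n : ℕ => (1 - r) ^ 2 * ((n + 1) * r ^ n)) 1 := by
  have hr1 : (1 - r) ^ 2 ≠ 0 := pow_ne_zero 2 (sub_ne_zero.2 (abs_lt.1 hr).2.ne')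
  have h := (hasSum_choose_mul_geometric_of_norm_lt_one 1 (r := r) hr).mul_left ((1 - r) ^ 2)
  rw [mul_one_div_cancel hr1] at h
  simpa [add_comm 1] using h

theorem tendsto_mul_tsum_geometric_of_tendsto_cesaroMean {x : ℕ → ℝ} {L : ℝ}
    (h : Tendsto (cesaroMean x) atTop (𝓝 L)) :
    Tendsto (fun δ => δ * ∑' m, (1 - δ) ^ m * x m) (𝓝[>] 0) (𝓝 L) := by
  set w : ℝ → ℕ → ℝ := fun δ n => δ ^ 2 * ((n + 1) * (1 - δ) ^ n)
  have hδ : ∀ᶠ δ in 𝓝[>] (0 : ℝ), δ ∈ Set.Ioo 0 1 := Ioo_mem_nhdsGT one_pos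
  have hw : ∀ᶠ δ in 𝓝[>] (0 : ℝ), HasSum (w δ) 1 := hδ.mono fun δ hδ => by
    simpa [w] using hasSum_sq_one_sub_mul_succ_mul_geometric (r := 1 - δ)
      (abs_lt.2 ⟨by linarith [hδ.2], by linarith [hδ.1]⟩)
  have hw0 : ∀ᶠ δ in 𝓝[>] (0 : ℝ), ∀ n, 0 ≤ w δ n := hδ.mono fun δ hδ n => by
    have := pow_nonneg (sub_nonneg.2 hδ.2.le) n
    positivity
  have hw_zero (n : ℕ) : Tendsto (fun δ => w δ n) (𝓝[>] 0) (𝓝 0) :=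
    (Continuous.tendsto' (by fun_prop) 0 0 (by simp [w])).mono_left nhdsWithin_le_nhds
  have hd : Tendsto (fun n => cesaroMean x (n + 1)) atTop (𝓝 L) :=
    h.comp (tendsto_add_atTop_nat 1)
  refine (tendsto_tsum_mul_of_tendsto hw0 hw hw_zero hd).congr' ?_
  filter_upwards [hδ, hw] with δ hδ hwδ
  obtain ⟨B, hB⟩ := hd.abs.bddAbove_range
  have hδ0 : δ ≠ 0 := hδ.1.ne'
  have hwd : (fun n => w δ n * cesaroMean x (n + 1)) =
      fun n => δ ^ 2 * ((1 - δ) ^ n * ∑ i ∈ range (n + 1), x i) := by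
    ext n
    simp only [w, cesaroMean]
    field_simp
    push_cast
    ring
  have hsum : Summable fun n => (1 - δ) ^ n * ∑ i ∈ range (n + 1), x i := by
    refine (summable_mul_left_iff (pow_ne_zero 2 hδ0)).1 ?_
    rw [← hwd]
    exact hwδ.summable.mul_of_abs_le fun n => hB ⟨n, rfl⟩
  rw [hwd, tsum_mul_left, (hasSum_pow_mul_of_hasSum_pow_mul_partialSum hsum.hasSum).tsum_eq]
  ring

theorem tendsto_tsum_mul_geometric_mul_of_tendsto_cesaroMean {x α : ℕ → ℝ} {a κ β L : ℝ}
    (hβ : 0 ≤ β) (hgeo : ∀ m, |α m - a| ≤ κ * β ^ m) (hx : Tendsto (cesaroMean x) atTop (𝓝 L))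
    (hsum : Summable fun m => ‖β ^ m * x m‖) :
    Tendsto (fun δ => ∑' m, δ * (1 - δ) ^ m * α m * x m) (𝓝[>] 0) (𝓝 (a * L)) := by
  have hu : Summable fun m => (α m - a) * x m := by
    refine Summable.of_norm_bounded (hsum.mul_left κ) fun m => ?_
    rw [norm_mul, norm_mul, norm_pow, Real.norm_of_nonneg hβ, ← mul_assoc, Real.norm_eq_abs]
    exact mul_le_mul_of_nonneg_right (hgeo m) (norm_nonneg _)
  simpa only [mul_assoc, tsum_mul_left] using
    tendsto_mul_tsum_geometric_of_tendsto_cesaroMean (tendsto_cesaroMean_mul_of_summable hx hu)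

section Probability

variable {Ω : Type*} [MeasurableSpace Ω] {μ : Measure Ω}

theorem ae_summable_norm_mul_of_identDistrib {z : ℕ → Ω → ℝ}
    (hz : ∀ m, IdentDistrib (z m) (z 0) μ μ) (hint : Integrable (z 0) μ) {c : ℕ → ℝ}
    (hc : Summable c) : ∀ᵐ ω ∂μ, Summable fun m => ‖c m * z m ω‖ := by
  have h := summable_norm_of_tsum_eLpNorm_ne_top le_rfl (f := fun m => c m • z m) (μ := μ)
    (fun m => (hz m).aestronglyMeasurable_fst.const_smul (c m)) ?_
  · simpa using h
  simp_rw [eLpNorm_const_smul, (hz _).eLpNorm_eq, ENNReal.tsum_mul_right]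
  exact ENNReal.mul_ne_top (tsum_enorm_ne_top_iff_summable_norm.2 hc.norm)
    (memLp_one_iff_integrable.2 hint).eLpNorm_ne_top

theorem tendstoInMeasure_of_tendsto_ae_of_isCountablyGenerated [IsFiniteMeasure μ] {ι E : Type*}
    [PseudoEMetricSpace E] {l : Filter ι} [l.IsCountablyGenerated] {f : ι → Ω → E} {g : Ω → E}
    (hf : ∀ i, AEStronglyMeasurable (f i) μ)
    (hfg : ∀ᵐ ω ∂μ, Tendsto (fun i => f i ω) l (𝓝 (g ω))) : TendstoInMeasure μ f l g := by
  intro ε hε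
  rw [tendsto_iff_seq_tendsto]
  intro u hu
  exact tendstoInMeasure_of_tendsto_ae (f := fun n => f (u n)) (fun n => hf _)
    (hfg.mono fun ω hω => hω.comp hu) ε hε

end Probability

theorem weak_law_of_small_step_sizes_general
    {Ω : Type*} [MeasurableSpace Ω] (μ : Measure Ω) [IsProbabilityMeasure μ]
    (z : ℕ → Ω → ℝ) (hmeas : ∀ m, Measurable (z m))
    (hindep : iIndepFun z μ)
    (hident : ∀ m, Measure.map (z m) μ = Measure.map (z 0) μ)
    (hint : Integrable (z 0) μ)
    (α : ℕ → ℝ)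
    (a κ β : ℝ) (hβ : β ∈ Set.Ioo (0:ℝ) 1)
    (hgeo : ∀ m, |α m - a| ≤ κ * β ^ m) :
    ∀ ε > (0:ℝ),
      Filter.Tendsto
        (fun δ => μ {ω | ε < |(∑' m : ℕ, δ * (1 - δ) ^ m * α m * z m ω)
          - a * ∫ ω', z 0 ω' ∂μ|})
        (nhdsWithin 0 (Set.Ioo (0:ℝ) 1)) (nhds 0) := by
  have hz (m : ℕ) : IdentDistrib (z m) (z 0) μ μ :=
    ⟨(hmeas m).aemeasurable, (hmeas 0).aemeasurable, hident m⟩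
  have hslln : ∀ᵐ ω ∂μ, Tendsto (cesaroMean fun m => z m ω) atTop (𝓝 (∫ ω', z 0 ω' ∂μ)) := by
    filter_upwards [strong_law_ae z hint (fun i j hij => hindep.indepFun hij) hz] with ω hω
    simp only [smul_eq_mul] at hω
    exact hω
  have hgeo_sum : ∀ᵐ ω ∂μ, Summable fun m => ‖β ^ m * z m ω‖ :=
    ae_summable_norm_mul_of_identDistrib hz hint (summable_geometric_of_lt_one hβ.1.le hβ.2)
  have hlim : ∀ᵐ ω ∂μ, Tendsto (fun δ => ∑' m, δ * (1 - δ) ^ m * α m * z m ω) (𝓝[>] 0)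
      (𝓝 (a * ∫ ω', z 0 ω' ∂μ)) := by
    filter_upwards [hslln, hgeo_sum] with ω hω hsum
    exact tendsto_tsum_mul_geometric_mul_of_tendsto_cesaroMean hβ.1.le hgeo hω hsum
  have hmeasT (δ : ℝ) : AEStronglyMeasurable (fun ω => ∑' m, δ * (1 - δ) ^ m * α m * z m ω) μ :=
    (Measurable.tsum fun m => (hmeas m).const_mul _).aestronglyMeasurable
  have hconv : TendstoInMeasure μ (fun δ ω => ∑' m, δ * (1 - δ) ^ m * α m * z m ω)
      (𝓝[Set.Ioo 0 1] 0) fun _ => a * ∫ ω', z 0 ω' ∂μ :=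
    (tendstoInMeasure_of_tendsto_ae_of_isCountablyGenerated hmeasT hlim).mono
      (nhdsWithin_mono 0 Set.Ioo_subset_Ioi_self)
  intro ε hε
  refine tendsto_of_tendsto_of_tendsto_of_le_of_le tendsto_const_nhds
    (tendstoInMeasure_iff_dist.1 hconv ε hε) (fun _ => zero_le)
    fun δ => measure_mono fun ω hω => ?_
  rw [Set.mem_ofPred_eq, Real.dist_eq]
  exact hω.le

theorem weak_law_of_small_step_sizes
    {Ω : Type*} [MeasurableSpace Ω] (μ : Measure Ω) [IsProbabilityMeasure μ]
    (z : ℕ → Ω → ℝ) (hmeas : ∀ m, Measurable (z m))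
    (hindep : iIndepFun z μ)
    (hident : ∀ m, Measure.map (z m) μ = Measure.map (z 0) μ)
    (hint : Integrable (z 0) μ)
    (α : ℕ → ℝ) (hα : ∀ m, α m ∈ Set.Ioo (0:ℝ) 1)
    (a κ β : ℝ) (hκ : 0 < κ) (hβ : β ∈ Set.Ioo (0:ℝ) 1)
    (hgeo : ∀ m, |α m - a| ≤ κ * β ^ m) :
    ∀ ε > (0:ℝ),
      Filter.Tendsto
        (fun δ => μ {ω | ε < |(∑' m : ℕ, δ * (1 - δ) ^ m * α m * z m ω)
          - a * ∫ ω', z 0 ω' ∂μ|})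
        (nhdsWithin 0 (Set.Ioo (0:ℝ) 1)) (nhds 0) :=
  weak_law_of_small_step_sizes_general μ z hmeas hindep hident hint α a κ β hβ hgeo
end

section
/- Let (z_m) be i.i.d. with finite variance σ² and mean m_z, and let c_m(δ) = δ(1-δ)^m α_m with α_m ∈ (0,1), |α_m − α| ≤ κβ^m. Then the Lindeberg condition holds for the triangular array {(c_m(δ)(z_m − m_z))/√δ}_{m≥0} as δ → 0, since max_m c_m(δ)/√δ ≤ √δ → 0 while ∑_m c_m(δ)²/δ → α²/2. -/
/-!
Since `α_m ∈ (0, 1)`, the weights `c_m(δ) = δ (1 - δ)^m α_m` are at most `δ`, so `c_m(δ) / √δ ≤ √δ`.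
With `r = (1 - δ)^2` one has `∑ c_m(δ)^2 / δ = (2 - δ)⁻¹ (1 - r) ∑ r^m α_m^2`, and the Abel means
`(1 - r) ∑ r^m α_m^2` tend to `a^2` as `r → 1⁻` because `α_m^2 → a^2` geometrically fast.
For the Lindeberg sum, `|c_m(δ)| / √δ ≤ √δ` puts the event `ε ≤ |c_m(δ) (z_m - m_z)| / √δ` inside
`ε / √δ ≤ |z_m - m_z|`; as the `z_m` are identically distributed, the sum is at most
`(∑ c_m(δ)^2 / δ) · E[(z_0 - m_z)^2; |z_0 - m_z| ≥ ε / √δ]`, a convergent factor times the tail of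
a square-integrable variable.
-/

open MeasureTheory ProbabilityTheory Filter Topology Set

section AbelMeans

variable {f : ℕ → ℝ} {L C β : ℝ}

lemma norm_pow_mul_sub_le (hf : ∀ m, |f m - L| ≤ C * β ^ m) {r : ℝ} (hr : |r| ≤ 1) (m : ℕ) :
    ‖r ^ m * (f m - L)‖ ≤ C * β ^ m := by
  rw [norm_mul, norm_pow, Real.norm_eq_abs, Real.norm_eq_abs]
  exact (mul_le_of_le_one_left (abs_nonneg _) (pow_le_one₀ (abs_nonneg r) hr)).trans (hf m)

lemma summable_pow_mul_of_abs_sub_le (hβ₀ : 0 ≤ β) (hβ₁ : β < 1)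
    (hf : ∀ m, |f m - L| ≤ C * β ^ m) {r : ℝ} (hr : |r| < 1) :
    Summable fun m => r ^ m * f m := by
  have hdev : Summable fun m => r ^ m * (f m - L) :=
    .of_norm_bounded ((summable_geometric_of_lt_one hβ₀ hβ₁).mul_left C)
      (norm_pow_mul_sub_le hf hr.le)
  convert hdev.add ((summable_geometric_of_abs_lt_one hr).mul_right L) using 2 with m
  ring

lemma abs_one_sub_mul_tsum_pow_mul_sub_le (hβ₀ : 0 ≤ β) (hβ₁ : β < 1)
    (hf : ∀ m, |f m - L| ≤ C * β ^ m) {r : ℝ} (hr₀ : 0 ≤ r) (hr₁ : r < 1) :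
    |(1 - r) * ∑' m, r ^ m * f m - L| ≤ (1 - r) * (C * (1 - β)⁻¹) := by
  have hr : |r| ≤ 1 := by rw [abs_of_nonneg hr₀]; exact hr₁.le
  have hdev : Summable fun m => r ^ m * (f m - L) :=
    .of_norm_bounded ((summable_geometric_of_lt_one hβ₀ hβ₁).mul_left C)
      (norm_pow_mul_sub_le hf hr)
  have hgeom : (1 - r) * ∑' m : ℕ, r ^ m = 1 := by
    rw [tsum_geometric_of_lt_one hr₀ hr₁, mul_inv_cancel₀ (sub_ne_zero.2 hr₁.ne')]
  have hsplit : ∑' m, r ^ m * f m = ∑' m, r ^ m * (f m - L) + L * ∑' m : ℕ, r ^ m := by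
    rw [← tsum_mul_left, ← hdev.tsum_add ((summable_geometric_of_lt_one hr₀ hr₁).mul_left L)]
    exact tsum_congr fun m => by ring
  have hbound : |∑' m, r ^ m * (f m - L)| ≤ C * (1 - β)⁻¹ :=
    tsum_of_norm_bounded ((hasSum_geometric_of_lt_one hβ₀ hβ₁).mul_left C)
      (norm_pow_mul_sub_le hf hr)
  calc |(1 - r) * ∑' m, r ^ m * f m - L| = |(1 - r) * ∑' m, r ^ m * (f m - L)| := by
        congr 1
        linear_combination (1 - r) * hsplit + L * hgeom
    _ = (1 - r) * |∑' m, r ^ m * (f m - L)| := by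
        rw [abs_mul, abs_of_nonneg (sub_nonneg.2 hr₁.le)]
    _ ≤ (1 - r) * (C * (1 - β)⁻¹) := by gcongr

lemma tendsto_one_sub_mul_tsum_pow_mul (hβ₀ : 0 ≤ β) (hβ₁ : β < 1)
    (hf : ∀ m, |f m - L| ≤ C * β ^ m) :
    Tendsto (fun r => (1 - r) * ∑' m, r ^ m * f m) (𝓝[<] 1) (𝓝 L) := by
  rw [← tendsto_sub_nhds_zero_iff]
  refine squeeze_zero_norm' (a := fun r => (1 - r) * (C * (1 - β)⁻¹)) ?_ ?_
  · filter_upwards [Ioo_mem_nhdsLT (show (0 : ℝ) < 1 by norm_num)] with r hr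
    exact abs_one_sub_mul_tsum_pow_mul_sub_le hβ₀ hβ₁ hf hr.1.le hr.2
  · have : Tendsto (fun r : ℝ => (1 - r) * (C * (1 - β)⁻¹)) (𝓝 1) (𝓝 ((1 - 1) * (C * (1 - β)⁻¹))) :=
      (tendsto_const_nhds.sub tendsto_id).mul_const _
    simpa using this.mono_left nhdsWithin_le_nhds

end AbelMeans

section GeometricWeights

lemma abs_mul_one_sub_pow_mul_div_sqrt_le {δ x : ℝ} (hδ : δ ∈ Icc 0 1) (hx : |x| ≤ 1) (m : ℕ) :
    |δ * (1 - δ) ^ m * x / √δ| ≤ √δ := by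
  obtain ⟨hδ₀, hδ₁⟩ := hδ
  have hpow : (1 - δ) ^ m ≤ 1 := pow_le_one₀ (sub_nonneg.2 hδ₁) (by linarith)
  have hweight : |δ * (1 - δ) ^ m * x| ≤ δ := by
    rw [abs_mul, abs_mul, abs_of_nonneg hδ₀, abs_pow, abs_of_nonneg (sub_nonneg.2 hδ₁)]
    exact (mul_le_of_le_one_right (mul_nonneg hδ₀ (pow_nonneg (sub_nonneg.2 hδ₁) m)) hx).trans
      (mul_le_of_le_one_right hδ₀ hpow)
  calc |δ * (1 - δ) ^ m * x / √δ| = |δ * (1 - δ) ^ m * x| / √δ := by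
        rw [abs_div, abs_of_nonneg (Real.sqrt_nonneg δ)]
    _ ≤ δ / √δ := div_le_div_of_nonneg_right hweight (Real.sqrt_nonneg δ)
    _ = √δ := Real.div_sqrt

lemma abs_sq_sub_sq_le_of_abs_le_one {x : ℝ} (hx : |x| ≤ 1) (a : ℝ) :
    |x ^ 2 - a ^ 2| ≤ (1 + |a|) * |x - a| := by
  rw [sq_sub_sq, abs_mul]
  gcongr
  exact (abs_add_le x a).trans (by linarith)

lemma one_sub_sq_lt_one {δ : ℝ} (hδ : δ ∈ Ioo 0 2) : (1 - δ) ^ 2 < 1 := by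
  nlinarith [hδ.1, hδ.2]

lemma tendsto_one_sub_sq_nhdsGT_zero : Tendsto (fun δ : ℝ => (1 - δ) ^ 2) (𝓝[>] 0) (𝓝[<] 1) := by
  refine tendsto_nhdsWithin_iff.2 ⟨?_, ?_⟩
  · have : Tendsto (fun δ : ℝ => (1 - δ) ^ 2) (𝓝 0) (𝓝 ((1 - 0) ^ 2)) :=
      (tendsto_const_nhds.sub tendsto_id).pow 2
    simpa using this.mono_left nhdsWithin_le_nhds
  · filter_upwards [Ioo_mem_nhdsGT (show (0 : ℝ) < 2 by norm_num)] with δ hδ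
    exact one_sub_sq_lt_one hδ

lemma mul_one_sub_pow_mul_sq (δ x : ℝ) (m : ℕ) :
    (δ * (1 - δ) ^ m * x) ^ 2 = δ ^ 2 * (((1 - δ) ^ 2) ^ m * x ^ 2) := by
  rw [← pow_mul, mul_comm 2 m, pow_mul]
  ring

lemma tsum_mul_one_sub_pow_mul_sq_div_eq {δ : ℝ} (hδ₂ : δ ≠ 2) (α : ℕ → ℝ) :
    (∑' m, (δ * (1 - δ) ^ m * α m) ^ 2) / δ
      = (1 - (1 - δ) ^ 2) * (∑' m, ((1 - δ) ^ 2) ^ m * α m ^ 2) * (2 - δ)⁻¹ := by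
  simp_rw [mul_one_sub_pow_mul_sq, tsum_mul_left]
  have : 2 - δ ≠ 0 := sub_ne_zero.2 (Ne.symm hδ₂)
  field_simp
  ring

lemma summable_mul_one_sub_pow_mul_sq {α : ℕ → ℝ} {a C β δ : ℝ} (hβ₀ : 0 ≤ β) (hβ₁ : β < 1)
    (hα : ∀ m, |α m ^ 2 - a ^ 2| ≤ C * β ^ m) (hδ : δ ∈ Ioo 0 2) :
    Summable fun m => (δ * (1 - δ) ^ m * α m) ^ 2 := by
  have hr : |(1 - δ) ^ 2| < 1 := by
    rw [abs_of_nonneg (sq_nonneg _)]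
    exact one_sub_sq_lt_one hδ
  exact ((summable_pow_mul_of_abs_sub_le hβ₀ hβ₁ hα hr).mul_left (δ ^ 2)).congr fun m =>
    (mul_one_sub_pow_mul_sq δ (α m) m).symm

lemma tendsto_tsum_mul_one_sub_pow_mul_sq_div {α : ℕ → ℝ} {a C β : ℝ} (hβ₀ : 0 ≤ β) (hβ₁ : β < 1)
    (hα : ∀ m, |α m ^ 2 - a ^ 2| ≤ C * β ^ m) :
    Tendsto (fun δ => (∑' m, (δ * (1 - δ) ^ m * α m) ^ 2) / δ) (𝓝[>] 0) (𝓝 (a ^ 2 / 2)) := by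
  have habel := (tendsto_one_sub_mul_tsum_pow_mul hβ₀ hβ₁ hα).comp tendsto_one_sub_sq_nhdsGT_zero
  have hinv : Tendsto (fun δ : ℝ => (2 - δ)⁻¹) (𝓝[>] 0) (𝓝 2⁻¹) := by
    have : Tendsto (fun δ : ℝ => (2 - δ)⁻¹) (𝓝 0) (𝓝 (2 - 0)⁻¹) :=
      (tendsto_const_nhds.sub tendsto_id).inv₀ (by norm_num)
    simpa using this.mono_left nhdsWithin_le_nhds
  rw [div_eq_mul_inv]
  refine (habel.mul hinv).congr' ?_
  filter_upwards [Ioo_mem_nhdsGT (show (0 : ℝ) < 2 by norm_num)] with δ hδ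
  exact (tsum_mul_one_sub_pow_mul_sq_div_eq hδ.2.ne α).symm

lemma tendsto_const_div_sqrt_nhdsGT_zero {ε : ℝ} (hε : 0 < ε) :
    Tendsto (fun δ => ε / √δ) (𝓝[>] 0) atTop := by
  have hsqrt : Tendsto Real.sqrt (𝓝[>] 0) (𝓝[>] 0) := tendsto_nhdsWithin_iff.2
    ⟨(Real.continuous_sqrt.tendsto' 0 0 Real.sqrt_zero).mono_left nhdsWithin_le_nhds,
      eventually_mem_nhdsWithin.mono fun δ hδ => Real.sqrt_pos.2 hδ⟩
  simpa only [div_eq_mul_inv, Pi.inv_apply] using hsqrt.inv_tendsto_nhdsGT_zero.const_mul_atTop hε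

end GeometricWeights

section LindebergSums

variable {Ω : Type*} [MeasurableSpace Ω] {μ : Measure Ω}

lemma tendsto_setIntegral_sq_abs_ge_atTop {Y : Ω → ℝ} (hY : Measurable Y)
    (hY2 : Integrable (fun ω => Y ω ^ 2) μ) :
    Tendsto (fun R : ℝ => ∫ ω in {ω | R ≤ |Y ω|}, Y ω ^ 2 ∂μ) atTop (𝓝 0) := by
  have h := tendsto_setIntegral_of_antitone (μ := μ) (f := fun ω => Y ω ^ 2)
    (s := fun R : ℝ => {ω | R ≤ |Y ω|})
    (fun R => measurableSet_le measurable_const hY.abs) (fun R R' hR ω hω => hR.trans hω)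
    ⟨0, hY2.integrableOn⟩
  have hempty : (⋂ R : ℝ, {ω | R ≤ |Y ω|}) = ∅ :=
    eq_empty_of_forall_notMem fun ω hω => (lt_add_one |Y ω|).not_ge (mem_iInter.1 hω (|Y ω| + 1))
  rwa [hempty, Measure.restrict_empty, integral_zero_measure] at h

lemma ProbabilityTheory.IdentDistrib.setIntegral_sq_abs_ge_eq {Ω' : Type*} [MeasurableSpace Ω']
    {ν : Measure Ω'} {X : Ω → ℝ} {Y : Ω' → ℝ} (h : IdentDistrib X Y μ ν) (R : ℝ) :
    ∫ ω in {ω | R ≤ |X ω|}, X ω ^ 2 ∂μ = ∫ ω in {ω | R ≤ |Y ω|}, Y ω ^ 2 ∂ν := by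
  have hs : MeasurableSet {x : ℝ | R ≤ |x|} := measurableSet_le measurable_const measurable_abs
  have hsq : Continuous fun x : ℝ => x ^ 2 := continuous_pow 2
  calc ∫ ω in {ω | R ≤ |X ω|}, X ω ^ 2 ∂μ = ∫ x in {x : ℝ | R ≤ |x|}, x ^ 2 ∂μ.map X :=
        (setIntegral_map hs hsq.aestronglyMeasurable h.aemeasurable_fst).symm
    _ = ∫ x in {x : ℝ | R ≤ |x|}, x ^ 2 ∂ν.map Y := by rw [h.map_eq]
    _ = ∫ ω in {ω | R ≤ |Y ω|}, Y ω ^ 2 ∂ν :=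
        setIntegral_map hs hsq.aestronglyMeasurable h.aemeasurable_snd

lemma setIntegral_sq_abs_ge_mul_le {X : Ω → ℝ} (hX : Integrable (fun ω => X ω ^ 2) μ)
    {k s : ℝ} (hk : |k| ≤ s) (ε : ℝ) :
    ∫ ω in {ω | ε ≤ |k * X ω|}, (k * X ω) ^ 2 ∂μ
      ≤ k ^ 2 * ∫ ω in {ω | ε / s ≤ |X ω|}, X ω ^ 2 ∂μ := by
  have hsub : {ω | ε ≤ |k * X ω|} ⊆ {ω | ε / s ≤ |X ω|} := fun ω hω =>
    div_le_of_le_mul₀ ((abs_nonneg k).trans hk) (abs_nonneg _)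
      (hω.out.trans (by rw [abs_mul, mul_comm]; gcongr))
  calc ∫ ω in {ω | ε ≤ |k * X ω|}, (k * X ω) ^ 2 ∂μ
        = ∫ ω in {ω | ε ≤ |k * X ω|}, k ^ 2 * X ω ^ 2 ∂μ := by simp_rw [mul_pow]
    _ ≤ ∫ ω in {ω | ε / s ≤ |X ω|}, k ^ 2 * X ω ^ 2 ∂μ :=
        setIntegral_mono_set (hX.const_mul _).integrableOn
          (ae_of_all _ fun ω => by positivity) hsub.eventuallyLE
    _ = k ^ 2 * ∫ ω in {ω | ε / s ≤ |X ω|}, X ω ^ 2 ∂μ := integral_const_mul _ _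

lemma tsum_setIntegral_sq_abs_ge_le {X : ℕ → Ω → ℝ} {Y : Ω → ℝ}
    (hX : ∀ m, IdentDistrib (X m) Y μ μ) (hY : MemLp Y 2 μ) {k : ℕ → ℝ} {s : ℝ}
    (hk : ∀ m, |k m| ≤ s) (hk2 : Summable fun m => k m ^ 2) (ε : ℝ) :
    ∑' m, ∫ ω in {ω | ε ≤ |k m * X m ω|}, (k m * X m ω) ^ 2 ∂μ
      ≤ (∑' m, k m ^ 2) * ∫ ω in {ω | ε / s ≤ |Y ω|}, Y ω ^ 2 ∂μ := by
  have hterm : ∀ m, ∫ ω in {ω | ε ≤ |k m * X m ω|}, (k m * X m ω) ^ 2 ∂μ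
      ≤ k m ^ 2 * ∫ ω in {ω | ε / s ≤ |Y ω|}, Y ω ^ 2 ∂μ := fun m => by
    rw [← (hX m).setIntegral_sq_abs_ge_eq]
    exact setIntegral_sq_abs_ge_mul_le ((hX m).symm.memLp_snd hY).integrable_sq (hk m) ε
  have hnonneg : ∀ m, 0 ≤ ∫ ω in {ω | ε ≤ |k m * X m ω|}, (k m * X m ω) ^ 2 ∂μ :=
    fun m => integral_nonneg fun ω => sq_nonneg _
  rw [← tsum_mul_right]
  exact (Summable.of_nonneg_of_le hnonneg hterm (hk2.mul_right _)).tsum_le_tsum hterm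
    (hk2.mul_right _)

end LindebergSums

theorem lindeberg_condition_for_weighted_array_general
    {Ω : Type*} [MeasurableSpace Ω] (μ : Measure Ω) [IsProbabilityMeasure μ]
    (z : ℕ → Ω → ℝ) (hmeas : ∀ m, Measurable (z m))
    (hident : ∀ m, Measure.map (z m) μ = Measure.map (z 0) μ)
    (hL2 : MemLp (z 0) 2 μ)
    (α : ℕ → ℝ) (hα : ∀ m, α m ∈ Set.Ioo (0:ℝ) 1)
    (a κ β : ℝ) (hβ : β ∈ Set.Ioo (0:ℝ) 1)
    (hgeo : ∀ m, |α m - a| ≤ κ * β ^ m)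
    (mz : ℝ) :
    (∀ δ ∈ Set.Ioo (0:ℝ) 1, ∀ m : ℕ,
        δ * (1 - δ) ^ m * α m / Real.sqrt δ ≤ Real.sqrt δ) ∧
    (Filter.Tendsto
        (fun δ => (∑' m : ℕ, (δ * (1 - δ) ^ m * α m) ^ 2) / δ)
        (nhdsWithin 0 (Set.Ioo (0:ℝ) 1)) (nhds (a ^ 2 / 2))) ∧
    (∀ ε > (0:ℝ),
      Filter.Tendsto
        (fun δ => ∑' m : ℕ,
          ∫ ω in {ω | ε ≤ |δ * (1 - δ) ^ m * α m * (z m ω - mz) / Real.sqrt δ|},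
            (δ * (1 - δ) ^ m * α m * (z m ω - mz) / Real.sqrt δ) ^ 2 ∂μ)
        (nhdsWithin 0 (Set.Ioo (0:ℝ) 1)) (nhds 0)) := by
  have hα₁ : ∀ m, |α m| ≤ 1 := fun m => abs_le.2 ⟨by linarith [(hα m).1], (hα m).2.le⟩
  have hα₂ : ∀ m, |α m ^ 2 - a ^ 2| ≤ (1 + |a|) * κ * β ^ m := fun m =>
    (abs_sq_sub_sq_le_of_abs_le_one (hα₁ m) a).trans (by rw [mul_assoc]; gcongr; exact hgeo m)
  have hweight : ∀ δ ∈ Ioo (0 : ℝ) 1, ∀ m : ℕ, |δ * (1 - δ) ^ m * α m / √δ| ≤ √δ :=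
    fun δ hδ m => abs_mul_one_sub_pow_mul_div_sqrt_le (Ioo_subset_Icc_self hδ) (hα₁ m) m
  have hfilter : 𝓝[Ioo (0 : ℝ) 1] 0 ≤ 𝓝[>] 0 := nhdsWithin_mono 0 Ioo_subset_Ioi_self
  have hsum := (tendsto_tsum_mul_one_sub_pow_mul_sq_div hβ.1.le hβ.2 hα₂).mono_left hfilter
  refine ⟨fun δ hδ m => (le_abs_self _).trans (hweight δ hδ m), hsum, fun ε hε => ?_⟩
  have hY : MemLp (fun ω => z 0 ω - mz) 2 μ := hL2.sub (memLp_const mz)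
  have hX : ∀ m, IdentDistrib (fun ω => z m ω - mz) (fun ω => z 0 ω - mz) μ μ := fun m =>
    IdentDistrib.comp ⟨(hmeas m).aemeasurable, (hmeas 0).aemeasurable, hident m⟩
      (measurable_sub_const mz)
  have htail := (tendsto_setIntegral_sq_abs_ge_atTop ((hmeas 0).sub_const mz) hY.integrable_sq).comp
    ((tendsto_const_div_sqrt_nhdsGT_zero hε).mono_left hfilter)
  refine squeeze_zero' (Eventually.of_forall fun δ => tsum_nonneg fun m =>
    integral_nonneg fun ω => sq_nonneg _) ?_ (by simpa using hsum.mul htail)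
  filter_upwards [self_mem_nhdsWithin] with δ hδ
  have hsq : Summable fun m => (δ * (1 - δ) ^ m * α m / √δ) ^ 2 := by
    simpa only [div_pow, Real.sq_sqrt hδ.1.le] using
      (summable_mul_one_sub_pow_mul_sq hβ.1.le hβ.2 hα₂ ⟨hδ.1, by linarith [hδ.2]⟩).div_const δ
  simp_rw [mul_div_right_comm _ (z _ _ - mz)]
  refine (tsum_setIntegral_sq_abs_ge_le hX hY (hweight δ hδ) hsq ε).trans_eq ?_
  simp only [div_pow, Real.sq_sqrt hδ.1.le, tsum_div_const]

theorem lindeberg_condition_for_weighted_array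
    {Ω : Type*} [MeasurableSpace Ω] (μ : Measure Ω) [IsProbabilityMeasure μ]
    (z : ℕ → Ω → ℝ) (hmeas : ∀ m, Measurable (z m))
    (hindep : iIndepFun z μ)
    (hident : ∀ m, Measure.map (z m) μ = Measure.map (z 0) μ)
    (hL2 : MemLp (z 0) 2 μ)
    (α : ℕ → ℝ) (hα : ∀ m, α m ∈ Set.Ioo (0:ℝ) 1)
    (a κ β : ℝ) (hκ : 0 < κ) (hβ : β ∈ Set.Ioo (0:ℝ) 1)
    (hgeo : ∀ m, |α m - a| ≤ κ * β ^ m)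
    (mz : ℝ) (hmz : mz = ∫ ω, z 0 ω ∂μ) :
    (∀ δ ∈ Set.Ioo (0:ℝ) 1, ∀ m : ℕ,
        δ * (1 - δ) ^ m * α m / Real.sqrt δ ≤ Real.sqrt δ) ∧
    (Filter.Tendsto
        (fun δ => (∑' m : ℕ, (δ * (1 - δ) ^ m * α m) ^ 2) / δ)
        (nhdsWithin 0 (Set.Ioo (0:ℝ) 1)) (nhds (a ^ 2 / 2))) ∧
    (∀ ε > (0:ℝ),
      Filter.Tendsto
        (fun δ => ∑' m : ℕ,
          ∫ ω in {ω | ε ≤ |δ * (1 - δ) ^ m * α m * (z m ω - mz) / Real.sqrt δ|},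
            (δ * (1 - δ) ^ m * α m * (z m ω - mz) / Real.sqrt δ) ^ 2 ∂μ)
        (nhdsWithin 0 (Set.Ioo (0:ℝ) 1)) (nhds 0)) :=
  lindeberg_condition_for_weighted_array_general μ z hmeas hident hL2 α hα a κ β hβ hgeo mz
end
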